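/- arXiv:2407.18053 — 5 statements merged into one kernel-verified Lean document; each statement's English description precedes it below -/
import Mathlib

section
/- Let F : (0,∞) → ℝ be four times continuously differentiable with F'(t) > 0 and F''(t) > 0 for all t > 0. Then the map t ↦ F'(t)/F''(t) is concave on (0,∞) if and only if the map (t, y) ↦ y²·F''(t)/F'(t) is convex on (0,∞) × ℝ. -/
open MeasureTheory ProbabilityTheory

/-- The standard Gaussian probability measure on `ℝ^k`. -/
noncomputable def gaussMeasure (k : ℕ) : Measure (Fin k → ℝ) :=
  Measure.pi fun _ => gaussianReal 0 1

/-- Multi-index power `w^α = w₁^{α₁} ⋯ w_k^{α_k}`. -/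
noncomputable def mpow {k : ℕ} (w : Fin k → ℂ) (α : Fin k → ℕ) : ℂ :=
  ∏ j, w j ^ α j

/-- Multivariate probabilist's Hermite polynomial `H_α(x) = ∫ (x+iy)^α dγ(y)`. -/
noncomputable def hermiteH {k : ℕ} (α : Fin k → ℕ) (x : Fin k → ℝ) : ℂ :=
  ∫ y, mpow (fun j => (x j : ℂ) + Complex.I * (y j : ℂ)) α ∂(gaussMeasure k)

/-- The finite set of multi-indices `α ∈ ℕ^k` with `|α| ≤ N`. -/
noncomputable def multiIdx (k N : ℕ) : Finset (Fin k → ℕ) :=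
  Finset.filter (fun α => ∑ j, α j ≤ N) (Fintype.piFinset fun _ => Finset.range (N + 1))

/-- The polynomial `f = Σ_{|α| ≤ N} c_α H_α`. -/
noncomputable def polyOf {k : ℕ} (N : ℕ) (c : (Fin k → ℕ) → ℂ) (x : Fin k → ℝ) : ℂ :=
  ∑ α ∈ multiIdx k N, c α * hermiteH α x

/-- The Mahler transform `T_z f = Σ_{|α| ≤ N} z^{|α|} c_α H_α`. -/
noncomputable def mahlerT {k : ℕ} (z : ℂ) (N : ℕ) (c : (Fin k → ℕ) → ℂ) (x : Fin k → ℝ) : ℂ :=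
  ∑ α ∈ multiIdx k N, z ^ (∑ j, α j) * c α * hermiteH α x

/-- `B` satisfies the growth condition: `|B''(t)| < exp(log^N (t+N))` for `t ≥ M`. -/
def GrowthCond (B : ℝ → ℝ) : Prop :=
  ∃ N M : ℝ, 0 < N ∧ 0 < M ∧ ∀ t ≥ M, |deriv (deriv B) t| < Real.exp (Real.log (t + N) ^ N)

/-!
With `g = F' / F'' > 0` the second function is `y² / g`. If `g` is concave, it dominates the
convex combination of its values, and `(y, s) ↦ y² / s` is jointly convex for `s > 0`
(Cauchy–Schwarz), so `y² / g` is convex. Conversely, at the points `(t, g t)` the function `y² / g`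
equals `g`, so its convexity there reads `M² / g(m) ≤ M`, where `m` is a convex combination of
two points and `M` the same combination of the values of `g`; hence `M ≤ g(m)`.
-/

open Set

section SqDiv

variable {𝕜 E : Type*} [Field 𝕜] [LinearOrder 𝕜] [IsStrictOrderedRing 𝕜]
  [AddCommGroup E] [Module 𝕜 E]

theorem add_sq_div_add_le {a b y₀ y₁ s₀ s₁ : 𝕜} (ha : 0 ≤ a) (hb : 0 ≤ b)
    (hs₀ : 0 < s₀) (hs₁ : 0 < s₁) (hs : 0 < a * s₀ + b * s₁) :
    (a * y₀ + b * y₁) ^ 2 / (a * s₀ + b * s₁) ≤ a * (y₀ ^ 2 / s₀) + b * (y₁ ^ 2 / s₁) := by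
  have h : a * (y₀ ^ 2 / s₀) + b * (y₁ ^ 2 / s₁)
      = (a * (y₀ ^ 2 * s₁) + b * (y₁ ^ 2 * s₀)) / (s₀ * s₁) := by
    field_simp
  rw [h, div_le_div_iff₀ hs (mul_pos hs₀ hs₁)]
  nlinarith [mul_nonneg (mul_nonneg ha hb) (sq_nonneg (y₀ * s₁ - y₁ * s₀))]

theorem ConcaveOn.convexOn_sq_div {s : Set E} {g : E → 𝕜} (hg : ConcaveOn 𝕜 s g)
    (hpos : ∀ x ∈ s, 0 < g x) :
    ConvexOn 𝕜 (s ×ˢ univ) (fun p : E × 𝕜 => p.2 ^ 2 / g p.1) := by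
  refine ⟨hg.1.prod convex_univ, ?_⟩
  rintro ⟨x₀, y₀⟩ ⟨hx₀, -⟩ ⟨x₁, y₁⟩ ⟨hx₁, -⟩ a b ha hb hab
  have hM : 0 < a * g x₀ + b * g x₁ := convex_Ioi 0 (hpos x₀ hx₀) (hpos x₁ hx₁) ha hb hab
  have hle : a * g x₀ + b * g x₁ ≤ g (a • x₀ + b • x₁) := hg.2 hx₀ hx₁ ha hb hab
  simp only [Prod.smul_mk, Prod.mk_add_mk, smul_eq_mul]
  calc (a * y₀ + b * y₁) ^ 2 / g (a • x₀ + b • x₁)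
      ≤ (a * y₀ + b * y₁) ^ 2 / (a * g x₀ + b * g x₁) :=
        div_le_div_of_nonneg_left (sq_nonneg _) hM hle
    _ ≤ a * (y₀ ^ 2 / g x₀) + b * (y₁ ^ 2 / g x₁) :=
        add_sq_div_add_le ha hb (hpos x₀ hx₀) (hpos x₁ hx₁) hM

theorem ConvexOn.concaveOn_of_sq_div {s : Set E} {g : E → 𝕜}
    (hg : ConvexOn 𝕜 (s ×ˢ univ) (fun p : E × 𝕜 => p.2 ^ 2 / g p.1))
    (hpos : ∀ x ∈ s, 0 < g x) : ConcaveOn 𝕜 s g := by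
  have hs : Convex 𝕜 s := fun x₀ hx₀ x₁ hx₁ a b ha hb hab =>
    (hg.1 (x := (x₀, 0)) (y := (x₁, 0)) ⟨hx₀, mem_univ 0⟩ ⟨hx₁, mem_univ 0⟩ ha hb hab).1
  refine ⟨hs, fun x₀ hx₀ x₁ hx₁ a b ha hb hab => ?_⟩
  have hM : 0 < a * g x₀ + b * g x₁ := convex_Ioi 0 (hpos x₀ hx₀) (hpos x₁ hx₁) ha hb hab
  have hm : 0 < g (a • x₀ + b • x₁) := hpos _ (hs hx₀ hx₁ ha hb hab)
  have h := hg.2 (x := (x₀, g x₀)) (y := (x₁, g x₁)) ⟨hx₀, mem_univ _⟩ ⟨hx₁, mem_univ _⟩ ha hb hab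
  simp only [Prod.smul_mk, Prod.mk_add_mk, smul_eq_mul, sq, mul_self_div_self] at h
  rw [mul_div_assoc, mul_le_iff_le_one_right hM, div_le_one hm] at h
  simpa only [smul_eq_mul] using h

theorem concaveOn_iff_convexOn_sq_div {s : Set E} {g : E → 𝕜} (hpos : ∀ x ∈ s, 0 < g x) :
    ConcaveOn 𝕜 s g ↔ ConvexOn 𝕜 (s ×ˢ univ) (fun p : E × 𝕜 => p.2 ^ 2 / g p.1) :=
  ⟨fun hg => hg.convexOn_sq_div hpos, fun hg => hg.concaveOn_of_sq_div hpos⟩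

end SqDiv

theorem concave_iff_convex_general
    (F' F'' : ℝ → ℝ)
    (hF'pos : ∀ t > (0:ℝ), 0 < F' t) (hF''pos : ∀ t > (0:ℝ), 0 < F'' t) :
    ConcaveOn ℝ (Set.Ioi 0) (fun t => F' t / F'' t) ↔
    ConvexOn ℝ ((Set.Ioi (0:ℝ)) ×ˢ (Set.univ : Set ℝ))
      (fun p : ℝ × ℝ => p.2 ^ 2 * F'' p.1 / F' p.1) := by
  have hpos : ∀ t ∈ Ioi (0:ℝ), 0 < F' t / F'' t := fun t ht => div_pos (hF'pos t ht) (hF''pos t ht)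
  simp only [← div_div_eq_mul_div]
  exact concaveOn_iff_convexOn_sq_div hpos

theorem concave_iff_convex
    (F F' F'' F''' F'''' : ℝ → ℝ)
    (hFd : ∀ t > (0:ℝ), HasDerivAt F (F' t) t)
    (hFd2 : ∀ t > (0:ℝ), HasDerivAt F' (F'' t) t)
    (hFd3 : ∀ t > (0:ℝ), HasDerivAt F'' (F''' t) t)
    (hFd4 : ∀ t > (0:ℝ), HasDerivAt F''' (F'''' t) t)
    (hFc4 : ContinuousOn F'''' (Set.Ioi 0))
    (hF'pos : ∀ t > (0:ℝ), 0 < F' t) (hF''pos : ∀ t > (0:ℝ), 0 < F'' t) :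
    ConcaveOn ℝ (Set.Ioi 0) (fun t => F' t / F'' t) ↔
    ConvexOn ℝ ((Set.Ioi (0:ℝ)) ×ˢ (Set.univ : Set ℝ))
      (fun p : ℝ × ℝ => p.2 ^ 2 * F'' p.1 / F' p.1) :=
  concave_iff_convex_general F' F'' hF'pos hF''pos
end

section
/- Let P : (0,∞) → ℝ be four times continuously differentiable with P' > 0 and P'' > 0 on (0,∞) and t ↦ P'(t)/P''(t) concave on (0,∞); extend P continuously to [0,∞) with P strictly increasing. Let r ∈ (0,1), define Q(t) = ∫₀ᵗ (P'(s))^{1/r²} ds and F = Q ∘ P⁻¹. Then for every t in the interior of the range of P: F'(t) = P'(P⁻¹(t))^{1/r² − 1}, F''(t) = (1/r² − 1)·P'(P⁻¹(t))^{1/r² − 3}·P''(P⁻¹(t)) > 0, F'(t)/F''(t) = (r²/(1−r²))·[P'(P⁻¹(t))]²/P''(P⁻¹(t)), and the map t ↦ F'(t)/F''(t) is concave on the interior of the range of P. -/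
open MeasureTheory ProbabilityTheory

/-!
The inverse `g = P⁻¹` has derivative `1 / P' ∘ g` on the interior of the range, so
`F' = (Q' ∘ g) / (P' ∘ g) = (P' ∘ g)^(1/r² - 1)`, and one more chain rule gives `F''`.
Hence `F' / F'' = K · (P'² / P'') ∘ g` with `K = r² / (1 - r²)`, and the derivative of
`(P'² / P'') ∘ g` is `1 + (P' / P'')' ∘ g`: it is antitone because `P' / P''` is concave and
`g` is increasing, which gives the concavity.
-/

open Set Function Filter Topology

lemma StrictMonoOn.strictMonoOn_invFunOn {α β : Type*} [LinearOrder α] [Preorder β] [Nonempty α]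
    {f : α → β} {s : Set α} (hf : StrictMonoOn f s) : StrictMonoOn (invFunOn f s) (f '' s) := by
  intro b₁ hb₁ b₂ hb₂ hlt
  rwa [← hf.lt_iff_lt (invFunOn_mem hb₁) (invFunOn_mem hb₂), invFunOn_eq hb₁, invFunOn_eq hb₂]

section InverseFunction

variable {P P' : ℝ → ℝ} {a t : ℝ}

lemma lt_invFunOn_of_mem_interior (hP : StrictMonoOn P (Ici a))
    (ht : t ∈ interior (P '' Ici a)) : a < invFunOn P (Ici a) t := by
  have hmem : t ∈ P '' Ici a := interior_subset ht
  have hsub : P '' Ici a ⊆ Ici (P a) :=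
    MapsTo.image_subset fun x hx => hP.monotoneOn self_mem_Ici hx hx
  have hlt : P a < t := by simpa using interior_mono hsub ht
  rwa [← hP.lt_iff_lt self_mem_Ici (invFunOn_mem hmem), invFunOn_eq hmem]

lemma continuousAt_invFunOn_of_mem_interior (hP : StrictMonoOn P (Ici a))
    (hPc : ∀ x > a, ContinuousAt P x) (ht : t ∈ interior (P '' Ici a)) :
    ContinuousAt (invFunOn P (Ici a)) t := by
  set g := invFunOn P (Ici a)
  have hgt : a < g t := lt_invFunOn_of_mem_interior hP ht
  refine (hP.strictMonoOn_invFunOn.mono interior_subset).continuousAt_of_image_mem_nhds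
    (isOpen_interior.mem_nhds ht) ?_
  have hnhds : Ioi a ∩ P ⁻¹' interior (P '' Ici a) ∈ 𝓝 (g t) :=
    inter_mem (Ioi_mem_nhds hgt) ((hPc _ hgt).preimage_mem_nhds
      (by rw [invFunOn_eq (interior_subset ht : t ∈ P '' Ici a)]
          exact isOpen_interior.mem_nhds ht))
  refine mem_of_superset hnhds fun x ⟨hx, hPx⟩ => ⟨P x, hPx, ?_⟩
  exact hP.injOn.leftInvOn_invFunOn (mem_Ici.2 hx.le)

lemma hasDerivAt_invFunOn_of_mem_interior (hP : StrictMonoOn P (Ici a))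
    (hPd : ∀ x > a, HasDerivAt P (P' x) x) (hP' : ∀ x > a, P' x ≠ 0)
    (ht : t ∈ interior (P '' Ici a)) :
    HasDerivAt (invFunOn P (Ici a)) (P' (invFunOn P (Ici a) t))⁻¹ t := by
  have hgt := lt_invFunOn_of_mem_interior hP ht
  refine (hPd _ hgt).of_local_left_inverse
    (continuousAt_invFunOn_of_mem_interior hP (fun x hx => (hPd x hx).continuousAt) ht)
    (hP' _ hgt) ?_
  filter_upwards [isOpen_interior.mem_nhds ht] with y hy using
    invFunOn_eq (interior_subset hy : y ∈ P '' Ici a)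

end InverseFunction

lemma hasDerivAt_integral_of_monotoneOn {f : ℝ → ℝ} {a s : ℝ} (hfc : ContinuousOn f (Ioi a))
    (hfm : MonotoneOn f (Ioi a)) (hf0 : ∀ x > a, 0 ≤ f x) (hs : a < s) :
    HasDerivAt (fun u => ∫ x in a..u, f x) (f s) s := by
  have hint : IntervalIntegrable f volume a s := by
    rw [intervalIntegrable_iff_integrableOn_Ioc_of_le hs.le]
    refine Integrable.mono' (g := fun _ => f s) (integrableOn_const measure_Ioc_lt_top.ne)
      ((hfc.mono Ioc_subset_Ioi_self).aestronglyMeasurable measurableSet_Ioc) ?_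
    refine (ae_restrict_iff' measurableSet_Ioc).2 (Eventually.of_forall fun x hx => ?_)
    rw [Real.norm_of_nonneg (hf0 x hx.1)]
    exact hfm hx.1 hs hx.2
  exact intervalIntegral.integral_hasDerivAt_right hint
    (hfc.stronglyMeasurableAtFilter isOpen_Ioi s hs) (hfc.continuousAt (isOpen_Ioi.mem_nhds hs))

section CompositionWithInverse

variable {P P' P'' P''' : ℝ → ℝ} {t : ℝ}

lemma hasDerivAt_integral_rpow_comp_invFunOn {e : ℝ} (hP : StrictMonoOn P (Ici 0))
    (hPd : ∀ x > 0, HasDerivAt P (P' x) x) (hPd2 : ∀ x > 0, HasDerivAt P' (P'' x) x)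
    (hP'pos : ∀ x > 0, 0 < P' x) (hP''pos : ∀ x > 0, 0 < P'' x) (he : 0 ≤ e)
    (ht : t ∈ interior (P '' Ici 0)) :
    HasDerivAt (fun y => ∫ s in (0:ℝ)..invFunOn P (Ici 0) y, P' s ^ e)
      (P' (invFunOn P (Ici 0) t) ^ (e - 1)) t := by
  have hgt := lt_invFunOn_of_mem_interior hP ht
  have hP'c : ContinuousOn P' (Ioi 0) := fun x hx => (hPd2 x hx).continuousAt.continuousWithinAt
  have hP'mono : MonotoneOn P' (Ioi 0) :=
    (strictMonoOn_of_deriv_pos (convex_Ioi 0) hP'c fun x hx => by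
      rw [interior_Ioi] at hx
      rw [(hPd2 x hx).deriv]
      exact hP''pos x hx).monotoneOn
  have hQ := hasDerivAt_integral_of_monotoneOn
    (fun x hx => (hP'c x hx).rpow_const (Or.inl (hP'pos x hx).ne'))
    (fun x hx y hy hxy => Real.rpow_le_rpow (hP'pos x hx).le (hP'mono hx hy hxy) he)
    (fun x hx => (Real.rpow_pos_of_pos (hP'pos x hx) e).le) hgt
  refine (hQ.comp t (hasDerivAt_invFunOn_of_mem_interior hP hPd
    (fun x hx => (hP'pos x hx).ne') ht)).congr_deriv ?_
  rw [Real.rpow_sub_one (hP'pos _ hgt).ne', div_eq_mul_inv]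

lemma hasDerivAt_rpow_comp_invFunOn (e : ℝ) (hP : StrictMonoOn P (Ici 0))
    (hPd : ∀ x > 0, HasDerivAt P (P' x) x) (hPd2 : ∀ x > 0, HasDerivAt P' (P'' x) x)
    (hP'pos : ∀ x > 0, 0 < P' x) (ht : t ∈ interior (P '' Ici 0)) :
    HasDerivAt (fun y => P' (invFunOn P (Ici 0) y) ^ (e - 1))
      ((e - 1) * P' (invFunOn P (Ici 0) t) ^ (e - 3) * P'' (invFunOn P (Ici 0) t)) t := by
  have hgt := lt_invFunOn_of_mem_interior hP ht
  have hx := hP'pos _ hgt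
  refine (((hPd2 _ hgt).comp t (hasDerivAt_invFunOn_of_mem_interior hP hPd
    (fun x hx => (hP'pos x hx).ne') ht)).rpow_const (p := e - 1) (Or.inl hx.ne')).congr_deriv ?_
  rw [Function.comp_apply, show e - 1 - 1 = (e - 3) + 1 by ring, Real.rpow_add_one hx.ne']
  field_simp

lemma hasDerivAt_sq_div_comp_invFunOn (hP : StrictMonoOn P (Ici 0))
    (hPd : ∀ x > 0, HasDerivAt P (P' x) x) (hPd2 : ∀ x > 0, HasDerivAt P' (P'' x) x)
    (hPd3 : ∀ x > 0, HasDerivAt P'' (P''' x) x)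
    (hP'pos : ∀ x > 0, 0 < P' x) (hP''pos : ∀ x > 0, 0 < P'' x)
    (ht : t ∈ interior (P '' Ici 0)) :
    HasDerivAt (fun y => P' (invFunOn P (Ici 0) y) ^ 2 / P'' (invFunOn P (Ici 0) y))
      (1 + deriv (fun x => P' x / P'' x) (invFunOn P (Ici 0) t)) t := by
  have hg := hasDerivAt_invFunOn_of_mem_interior hP hPd (fun x hx => (hP'pos x hx).ne') ht
  set g := invFunOn P (Ici 0)
  have hgt : 0 < g t := lt_invFunOn_of_mem_interior hP ht
  have hx := hP'pos _ hgt
  have hy := hP''pos _ hgt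
  refine ((((hPd2 _ hgt).comp t hg).pow 2).div ((hPd3 _ hgt).comp t hg) hy.ne').congr_deriv ?_
  have hφ : HasDerivAt (fun x => P' x / P'' x) _ (g t) := (hPd2 _ hgt).div (hPd3 _ hgt) hy.ne'
  rw [hφ.deriv]
  simp only [Function.comp_apply, Pi.pow_apply]
  field_simp
  ring

lemma concaveOn_sq_div_comp_invFunOn (hPc : ContinuousOn P (Ici 0))
    (hP : StrictMonoOn P (Ici 0))
    (hPd : ∀ x > 0, HasDerivAt P (P' x) x) (hPd2 : ∀ x > 0, HasDerivAt P' (P'' x) x)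
    (hPd3 : ∀ x > 0, HasDerivAt P'' (P''' x) x)
    (hP'pos : ∀ x > 0, 0 < P' x) (hP''pos : ∀ x > 0, 0 < P'' x)
    (hconc : ConcaveOn ℝ (Ioi 0) fun x => P' x / P'' x) :
    ConcaveOn ℝ (interior (P '' Ici 0))
      fun y => P' (invFunOn P (Ici 0) y) ^ 2 / P'' (invFunOn P (Ici 0) y) := by
  have hderiv := fun t (ht : t ∈ interior (P '' Ici 0)) =>
    hasDerivAt_sq_div_comp_invFunOn hP hPd hPd2 hPd3 hP'pos hP''pos ht
  have hconv : Convex ℝ (interior (P '' Ici 0)) :=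
    (isPreconnected_Ici.image P hPc).ordConnected.convex.interior
  refine AntitoneOn.concaveOn_of_deriv hconv
    (fun t ht => (hderiv t ht).continuousAt.continuousWithinAt) ?_ ?_ <;> rw [interior_interior]
  · exact fun t ht => (hderiv t ht).differentiableAt.differentiableWithinAt
  intro t₁ ht₁ t₂ ht₂ hle
  rw [(hderiv t₁ ht₁).deriv, (hderiv t₂ ht₂).deriv]
  have hφ : AntitoneOn (deriv fun x => P' x / P'' x) (Ioi 0) := hconc.antitoneOn_deriv
    fun x hx => ((hPd2 x hx).div (hPd3 x hx) (hP''pos x hx).ne').differentiableAt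
  have hg := (hP.strictMonoOn_invFunOn.mono interior_subset).monotoneOn ht₁ ht₂ hle
  exact add_le_add_right (hφ (lt_invFunOn_of_mem_interior hP ht₁)
    (lt_invFunOn_of_mem_interior hP ht₂) hg) 1

lemma rpow_sub_one_div_mul_rpow_sub_three {x y r : ℝ} (hx : 0 < x) (hr : r ≠ 0) :
    x ^ (1 / r ^ 2 - 1) / ((1 / r ^ 2 - 1) * x ^ (1 / r ^ 2 - 3) * y)
      = r ^ 2 / (1 - r ^ 2) * x ^ 2 / y := by
  rw [show (1 : ℝ) / r ^ 2 - 1 = (1 / r ^ 2 - 3) + 2 by ring, Real.rpow_add hx, Real.rpow_two]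
  field_simp
  ring

end CompositionWithInverse

theorem hariya_F_computation_general
    (P P' P'' P''' : ℝ → ℝ)
    (hPd : ∀ t > (0:ℝ), HasDerivAt P (P' t) t)
    (hPd2 : ∀ t > (0:ℝ), HasDerivAt P' (P'' t) t)
    (hPd3 : ∀ t > (0:ℝ), HasDerivAt P'' (P''' t) t)
    (hP'pos : ∀ t > (0:ℝ), 0 < P' t) (hP''pos : ∀ t > (0:ℝ), 0 < P'' t)
    (hconc : ConcaveOn ℝ (Set.Ioi 0) fun t => P' t / P'' t)
    (hPc : ContinuousOn P (Set.Ici 0)) (hPmono : StrictMonoOn P (Set.Ici 0))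
    (r : ℝ) (hr : r ∈ Set.Ioo (0:ℝ) 1)
    (Q : ℝ → ℝ) (hQ : ∀ t, Q t = ∫ s in (0:ℝ)..t, P' s ^ ((1:ℝ) / r ^ 2))
    (F : ℝ → ℝ) (hF : F = fun t => Q (Function.invFunOn P (Set.Ici 0) t)) :
    (∀ t ∈ interior (P '' Set.Ici 0),
      deriv F t = P' (Function.invFunOn P (Set.Ici 0) t) ^ ((1:ℝ) / r ^ 2 - 1) ∧
      deriv (deriv F) t = ((1:ℝ) / r ^ 2 - 1)
          * P' (Function.invFunOn P (Set.Ici 0) t) ^ ((1:ℝ) / r ^ 2 - 3)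
          * P'' (Function.invFunOn P (Set.Ici 0) t) ∧
      0 < deriv (deriv F) t ∧
      deriv F t / deriv (deriv F) t
        = (r ^ 2 / (1 - r ^ 2)) * (P' (Function.invFunOn P (Set.Ici 0) t)) ^ 2
            / P'' (Function.invFunOn P (Set.Ici 0) t)) ∧
    ConcaveOn ℝ (interior (P '' Set.Ici 0)) (fun t => deriv F t / deriv (deriv F) t) := by
  obtain ⟨hr0, hr1⟩ := hr
  have hF' : ∀ t ∈ interior (P '' Ici 0),
      HasDerivAt F (P' (invFunOn P (Ici 0) t) ^ (1 / r ^ 2 - 1)) t := fun t ht => by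
    simpa only [hF, hQ] using
      hasDerivAt_integral_rpow_comp_invFunOn hPmono hPd hPd2 hP'pos hP''pos (by positivity) ht
  have hF'' : ∀ t ∈ interior (P '' Ici 0), HasDerivAt (deriv F) ((1 / r ^ 2 - 1)
      * P' (invFunOn P (Ici 0) t) ^ (1 / r ^ 2 - 3) * P'' (invFunOn P (Ici 0) t)) t :=
    fun t ht => (hasDerivAt_rpow_comp_invFunOn _ hPmono hPd hPd2 hP'pos ht).congr_of_eventuallyEq
      (eventually_of_mem (isOpen_interior.mem_nhds ht) fun y hy => (hF' y hy).deriv)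
  have hratio : ∀ t ∈ interior (P '' Ici 0), deriv F t / deriv (deriv F) t
      = r ^ 2 / (1 - r ^ 2) * P' (invFunOn P (Ici 0) t) ^ 2 / P'' (invFunOn P (Ici 0) t) :=
    fun t ht => by
      rw [(hF' t ht).deriv, (hF'' t ht).deriv]
      exact rpow_sub_one_div_mul_rpow_sub_three
        (hP'pos _ (lt_invFunOn_of_mem_interior hPmono ht)) hr0.ne'
  refine ⟨fun t ht => ⟨(hF' t ht).deriv, (hF'' t ht).deriv, ?_, hratio t ht⟩, ?_⟩
  · have hgt := lt_invFunOn_of_mem_interior hPmono ht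
    have he : 0 < 1 / r ^ 2 - 1 := by
      rw [sub_pos, one_lt_div (by positivity)]; nlinarith
    rw [(hF'' t ht).deriv]
    exact mul_pos (mul_pos he (Real.rpow_pos_of_pos (hP'pos _ hgt) _)) (hP''pos _ hgt)
  · have hK : 0 ≤ r ^ 2 / (1 - r ^ 2) := div_nonneg (sq_nonneg r) (by nlinarith)
    refine ((concaveOn_sq_div_comp_invFunOn hPc hPmono hPd hPd2 hPd3 hP'pos hP''pos
      hconc).smul hK).congr fun t ht => ?_
    rw [hratio t ht, mul_div_assoc]
    rfl

theorem hariya_F_computation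
    (P P' P'' P''' P'''' : ℝ → ℝ)
    (hPd : ∀ t > (0:ℝ), HasDerivAt P (P' t) t)
    (hPd2 : ∀ t > (0:ℝ), HasDerivAt P' (P'' t) t)
    (hPd3 : ∀ t > (0:ℝ), HasDerivAt P'' (P''' t) t)
    (hPd4 : ∀ t > (0:ℝ), HasDerivAt P''' (P'''' t) t)
    (hPc4 : ContinuousOn P'''' (Set.Ioi 0))
    (hP'pos : ∀ t > (0:ℝ), 0 < P' t) (hP''pos : ∀ t > (0:ℝ), 0 < P'' t)
    (hconc : ConcaveOn ℝ (Set.Ioi 0) fun t => P' t / P'' t)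
    (hPc : ContinuousOn P (Set.Ici 0)) (hPmono : StrictMonoOn P (Set.Ici 0))
    (r : ℝ) (hr : r ∈ Set.Ioo (0:ℝ) 1)
    (Q : ℝ → ℝ) (hQ : ∀ t, Q t = ∫ s in (0:ℝ)..t, P' s ^ ((1:ℝ) / r ^ 2))
    (F : ℝ → ℝ) (hF : F = fun t => Q (Function.invFunOn P (Set.Ici 0) t)) :
    (∀ t ∈ interior (P '' Set.Ici 0),
      deriv F t = P' (Function.invFunOn P (Set.Ici 0) t) ^ ((1:ℝ) / r ^ 2 - 1) ∧
      deriv (deriv F) t = ((1:ℝ) / r ^ 2 - 1)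
          * P' (Function.invFunOn P (Set.Ici 0) t) ^ ((1:ℝ) / r ^ 2 - 3)
          * P'' (Function.invFunOn P (Set.Ici 0) t) ∧
      0 < deriv (deriv F) t ∧
      deriv F t / deriv (deriv F) t
        = (r ^ 2 / (1 - r ^ 2)) * (P' (Function.invFunOn P (Set.Ici 0) t)) ^ 2
            / P'' (Function.invFunOn P (Set.Ici 0) t)) ∧
    ConcaveOn ℝ (interior (P '' Set.Ici 0)) (fun t => deriv F t / deriv (deriv F) t) :=
  hariya_F_computation_general P P' P'' P''' hPd hPd2 hPd3 hP'pos hP''pos hconc hPc hPmono r hr Q hQ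
    F hF
end

section
/- Let K > 0 and set c = K + 1/K (so c ≥ 2). Then for every z ∈ ℂ, the inequality (K + 1)·(1 − |z|²) ≥ |K − 1|·|1 − z²| holds if and only if both |2z + i√(c − 2)| ≤ √(c + 2) and |2z − i√(c − 2)| ≤ √(c + 2) hold. -/
open MeasureTheory ProbabilityTheory

/-! With `a = |K - 1| / √K` and `b = (K + 1) / √K`, so that `b ^ 2 = a ^ 2 + 4`, both conditions
reduce to `a * |Im z| ≤ 1 - ‖z‖ ^ 2`: the first because
`‖1 - z ^ 2‖ ^ 2 = (1 - ‖z‖ ^ 2) ^ 2 + 4 (Im z) ^ 2`, the second because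
`‖2 z ± i a‖ ^ 2 = 4 ‖z‖ ^ 2 ± 4 a Im z + a ^ 2`. -/

open Complex

lemma Complex.norm_one_sub_sq_sq (z : ℂ) :
    ‖1 - z ^ 2‖ ^ 2 = (1 - ‖z‖ ^ 2) ^ 2 + 4 * z.im ^ 2 := by
  rw [Complex.sq_norm, Complex.sq_norm]
  simp only [normSq_apply, sub_re, sub_im, one_re, one_im, pow_two, mul_re, mul_im]
  ring

lemma Complex.norm_two_mul_add_I_mul_sq (z : ℂ) (a : ℝ) :
    ‖2 * z + I * a‖ ^ 2 = 4 * ‖z‖ ^ 2 + 4 * a * z.im + a ^ 2 := by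
  rw [Complex.sq_norm, Complex.sq_norm]
  simp only [normSq_apply, add_re, add_im, mul_re, mul_im, I_re, I_im, ofReal_re,
    ofReal_im, re_ofNat, im_ofNat]
  ring

lemma Complex.norm_two_mul_sub_I_mul_sq (z : ℂ) (a : ℝ) :
    ‖2 * z - I * a‖ ^ 2 = 4 * ‖z‖ ^ 2 - 4 * a * z.im + a ^ 2 := by
  have := norm_two_mul_add_I_mul_sq z (-a)
  push_cast at this
  rw [mul_neg, ← sub_eq_add_neg] at this
  linarith

section Lens

variable {a b : ℝ}

lemma mul_abs_of_nonneg (ha : 0 ≤ a) (y : ℝ) : a * |y| = |a * y| := by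
  rw [abs_mul, abs_of_nonneg ha]

lemma mul_sqrt_le_mul_iff_mul_abs_le (ha : 0 ≤ a) (hb : 0 ≤ b) (hab : b ^ 2 = a ^ 2 + 4)
    (u y : ℝ) : a * √(u ^ 2 + 4 * y ^ 2) ≤ b * u ↔ a * |y| ≤ u := by
  have hb : 0 < b := hb.lt_of_ne (by rintro rfl; nlinarith)
  have hX : 0 ≤ u ^ 2 + 4 * y ^ 2 := by positivity
  constructor
  · intro h
    have hu : 0 ≤ u :=
      (mul_nonneg_iff_of_pos_left hb).mp ((mul_nonneg ha (Real.sqrt_nonneg _)).trans h)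
    have h2 := pow_le_pow_left₀ (by positivity) h 2
    rw [mul_pow, mul_pow, Real.sq_sqrt hX, hab] at h2
    rw [mul_abs_of_nonneg ha]
    exact abs_le_of_sq_le_sq (by nlinarith) hu
  · intro h
    have hu : 0 ≤ u := (by positivity : 0 ≤ a * |y|).trans h
    have h2 : (a * y) ^ 2 ≤ u ^ 2 := by
      rw [mul_pow, ← sq_abs y, ← mul_pow]
      exact pow_le_pow_left₀ (by positivity) h 2
    rw [← sq_le_sq₀ (by positivity) (by positivity), mul_pow, mul_pow, Real.sq_sqrt hX, hab]
    nlinarith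

lemma mul_norm_one_sub_sq_le_iff (ha : 0 ≤ a) (hb : 0 ≤ b) (hab : b ^ 2 = a ^ 2 + 4) (z : ℂ) :
    a * ‖1 - z ^ 2‖ ≤ b * (1 - ‖z‖ ^ 2) ↔ a * |z.im| ≤ 1 - ‖z‖ ^ 2 := by
  rw [← Real.sqrt_sq (norm_nonneg (1 - z ^ 2)), norm_one_sub_sq_sq]
  exact mul_sqrt_le_mul_iff_mul_abs_le ha hb hab _ _

lemma norm_two_mul_add_sub_I_mul_le_iff (ha : 0 ≤ a) (hb : 0 ≤ b) (hab : b ^ 2 = a ^ 2 + 4)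
    (z : ℂ) :
    ‖2 * z + I * a‖ ≤ b ∧ ‖2 * z - I * a‖ ≤ b ↔ a * |z.im| ≤ 1 - ‖z‖ ^ 2 := by
  rw [← sq_le_sq₀ (norm_nonneg _) hb, ← sq_le_sq₀ (norm_nonneg _) hb,
    norm_two_mul_add_I_mul_sq, norm_two_mul_sub_I_mul_sq, hab, mul_abs_of_nonneg ha, abs_le]
  constructor <;> rintro ⟨h₁, h₂⟩ <;> constructor <;> linarith

end Lens

lemma Real.sqrt_add_inv_sub_two {K : ℝ} (hK : 0 < K) : √(K + 1 / K - 2) = |K - 1| / √K := by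
  rw [← Real.sqrt_sq (by positivity : 0 ≤ |K - 1| / √K), div_pow, sq_abs, Real.sq_sqrt hK.le]
  congr 1
  field_simp
  ring

lemma Real.sqrt_add_inv_add_two {K : ℝ} (hK : 0 < K) : √(K + 1 / K + 2) = (K + 1) / √K := by
  rw [← Real.sqrt_sq (by positivity : 0 ≤ (K + 1) / √K), div_pow, Real.sq_sqrt hK.le]
  congr 1
  field_simp
  ring

theorem lens_domain_equivalence (K : ℝ) (hK : 0 < K) (z : ℂ) :
    ((K + 1) * (1 - ‖z‖ ^ 2) ≥ |K - 1| * ‖1 - z ^ 2‖) ↔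
    (‖2 * z + Complex.I * (Real.sqrt (K + 1 / K - 2) : ℂ)‖
        ≤ Real.sqrt (K + 1 / K + 2) ∧
     ‖2 * z - Complex.I * (Real.sqrt (K + 1 / K - 2) : ℂ)‖
        ≤ Real.sqrt (K + 1 / K + 2)) := by
  rw [Real.sqrt_add_inv_sub_two hK, Real.sqrt_add_inv_add_two hK]
  have hsqrtK : 0 < √K := Real.sqrt_pos.mpr hK
  have hab : ((K + 1) / √K) ^ 2 = (|K - 1| / √K) ^ 2 + 4 := by
    rw [div_pow, div_pow, sq_abs, Real.sq_sqrt hK.le]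
    field_simp
    ring
  have ha : 0 ≤ |K - 1| / √K := by positivity
  have hb : 0 ≤ (K + 1) / √K := by positivity
  rw [norm_two_mul_add_sub_I_mul_le_iff ha hb hab, ← mul_norm_one_sub_sq_le_iff ha hb hab,
    ge_iff_le, div_mul_eq_mul_div, div_mul_eq_mul_div, div_le_div_iff_of_pos_right hsqrtK]
end

section
/- Let p > 0 and P(t) = ∫₀ᵗ s^p·log(1+s) ds for t ≥ 0. Then: (a) for all t > 0, t·P''(t)/P'(t) = p + t/((t+1)·log(1+t)); (b) the function t ↦ t·P''(t)/P'(t) is strictly decreasing on (0,∞), with infimum p (its limit as t → ∞) and supremum p + 1 (its limit as t → 0⁺); (c) c_P := sup_{t>0} { t·P''(t)/P'(t) + P'(t)/(t·P''(t)) } = max{ p + 1/p, p + 1 + 1/(p+1) }. -/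
/-! With `P'(t) = t^p log(1+t)` the ratio `t P''(t) / P'(t)` equals `p + ψ(t)`, where
`ψ(t) = t / ((t+1) log(1+t))`. From `t/(1+t) ≤ log(1+t) < t` one gets `1/(t+1) ≤ ψ(t) ≤ 1` and
`ψ' < 0`, so `ψ` decreases from `1` at `0⁺` to `0` at `∞` and the ratio sweeps out `(p, p+1)`.
As `x ↦ x + 1/x` is convex on `(0, ∞)`, its supremum over this range is the larger of its two
endpoint values, each of which is approached along one of the two limits. -/

open MeasureTheory ProbabilityTheory

open Real Filter Set Topology intervalIntegral

theorem isLUB_image_of_tendsto {α β : Type*} [TopologicalSpace β] [LinearOrder β]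
    [OrderTopology β] {f : α → β} {s : Set α} {l : Filter α} [l.NeBot] {b : β}
    (hb : ∀ x ∈ s, f x ≤ b) (hs : s ∈ l) (hf : Tendsto f l (𝓝 b)) :
    IsLUB (f '' s) b :=
  isLUB_of_mem_closure (forall_mem_image.2 hb)
    (mem_closure_of_tendsto hf (mem_of_superset hs (subset_preimage_image f s)))

theorem isGLB_image_of_tendsto {α β : Type*} [TopologicalSpace β] [LinearOrder β]
    [OrderTopology β] {f : α → β} {s : Set α} {l : Filter α} [l.NeBot] {b : β}
    (hb : ∀ x ∈ s, b ≤ f x) (hs : s ∈ l) (hf : Tendsto f l (𝓝 b)) :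
    IsGLB (f '' s) b :=
  isGLB_of_mem_closure (forall_mem_image.2 hb)
    (mem_closure_of_tendsto hf (mem_of_superset hs (subset_preimage_image f s)))

theorem isLUB_image_max_of_tendsto {α β : Type*} [TopologicalSpace β] [LinearOrder β]
    [OrderTopology β] {f : α → β} {s : Set α} {l₁ l₂ : Filter α} [l₁.NeBot] [l₂.NeBot]
    {b₁ b₂ : β} (hb : ∀ x ∈ s, f x ≤ max b₁ b₂) (hs₁ : s ∈ l₁)
    (hs₂ : s ∈ l₂) (hf₁ : Tendsto f l₁ (𝓝 b₁)) (hf₂ : Tendsto f l₂ (𝓝 b₂)) :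
    IsLUB (f '' s) (max b₁ b₂) := by
  rcases max_choice b₁ b₂ with h | h <;> rw [h] at hb ⊢
  exacts [isLUB_image_of_tendsto hb hs₁ hf₁, isLUB_image_of_tendsto hb hs₂ hf₂]

theorem add_one_div_le_max {a b x : ℝ} (ha : 0 < a) (hx : x ∈ Icc a b) :
    x + 1 / x ≤ max (a + 1 / a) (b + 1 / b) := by
  have hconv : ConvexOn ℝ (Ioi 0) fun y : ℝ => y + y ^ (-1 : ℤ) :=
    (convexOn_id (convex_Ioi 0)).add (convexOn_zpow (-1))
  simp only [zpow_neg_one, ← one_div] at hconv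
  exact hconv.le_max_of_mem_Icc ha (ha.trans_le (hx.1.trans hx.2)) hx

theorem hasDerivAt_integral_of_continuousOn {E : Type*} [NormedAddCommGroup E]
    [NormedSpace ℝ E] [CompleteSpace E] {f : ℝ → E} {s : Set ℝ} (hs : IsOpen s)
    (hf : ContinuousOn f s) {a t : ℝ} (hat : uIcc a t ⊆ s) :
    HasDerivAt (fun u => ∫ x in a..u, f x) (f t) t :=
  have ht : t ∈ s := hat right_mem_uIcc
  integral_hasDerivAt_right ((hf.mono hat).intervalIntegrable)
    (hf.stronglyMeasurableAtFilter hs t ht) (hf.continuousAt (hs.mem_nhds ht))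

theorem continuousOn_rpow_mul_log_one_add {p : ℝ} (hp : 0 ≤ p) :
    ContinuousOn (fun s : ℝ => s ^ p * log (1 + s)) (Ioi (-1)) := by
  intro s hs
  have hs' : 1 + s ≠ 0 := by simp only [mem_Ioi] at hs; linarith
  exact ((continuousAt_rpow_const s p (Or.inr hp)).mul
    ((continuousAt_const.add continuousAt_id).log hs')).continuousWithinAt

theorem hasDerivAt_log_one_add {t : ℝ} (ht : -1 < t) :
    HasDerivAt (fun s : ℝ => log (1 + s)) (1 / (1 + t)) t := by
  simpa using ((hasDerivAt_id' t).const_add 1).log (by linarith)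

theorem hasDerivAt_rpow_mul_log_one_add (p : ℝ) {t : ℝ} (ht : 0 < t) :
    HasDerivAt (fun s : ℝ => s ^ p * log (1 + s))
      (p * t ^ (p - 1) * log (1 + t) + t ^ p / (1 + t)) t := by
  simpa only [mul_one_div] using
    (hasDerivAt_rpow_const (Or.inl ht.ne')).fun_mul (hasDerivAt_log_one_add (by linarith))

noncomputable def logCorrection (t : ℝ) : ℝ := t / ((t + 1) * log (1 + t))

theorem logCorrection_pos {t : ℝ} (ht : 0 < t) : 0 < logCorrection t := by
  have : 0 < log (1 + t) := log_pos (by linarith)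
  unfold logCorrection; positivity

theorem one_div_add_one_le_logCorrection {t : ℝ} (ht : 0 < t) :
    1 / (t + 1) ≤ logCorrection t := by
  have hL : 0 < log (1 + t) := log_pos (by linarith)
  have : log (1 + t) ≤ t := by linarith [log_le_sub_one_of_pos (by linarith : (0:ℝ) < 1 + t)]
  unfold logCorrection
  rw [div_le_div_iff₀ (by linarith) (by positivity)]
  nlinarith

theorem logCorrection_le_one {t : ℝ} (ht : 0 < t) : logCorrection t ≤ 1 := by
  have h := one_sub_inv_le_log_of_pos (by linarith : (0:ℝ) < 1 + t)
  have hL : 0 < log (1 + t) := log_pos (by linarith)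
  unfold logCorrection
  rw [div_le_one (by positivity)]
  have : (1 + t) * (1 - (1 + t)⁻¹) = t := by field_simp; ring
  nlinarith [mul_le_mul_of_nonneg_left h (by linarith : (0:ℝ) ≤ 1 + t)]

theorem hasDerivAt_logCorrection {t : ℝ} (ht : 0 < t) :
    HasDerivAt logCorrection ((log (1 + t) - t) / ((t + 1) * log (1 + t)) ^ 2) t := by
  have hL : 0 < log (1 + t) := log_pos (by linarith)
  have hden := ((hasDerivAt_id' t).add_const 1).fun_mul (hasDerivAt_log_one_add (by linarith))
  refine ((hasDerivAt_id' t).fun_div hden (by positivity)).congr_deriv ?_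
  field_simp
  ring

theorem strictAntiOn_logCorrection : StrictAntiOn logCorrection (Ioi 0) := by
  refine strictAntiOn_of_deriv_neg (convex_Ioi 0)
    (fun t ht => (hasDerivAt_logCorrection ht).continuousAt.continuousWithinAt) fun t ht => ?_
  rw [interior_Ioi, mem_Ioi] at ht
  have hL : 0 < log (1 + t) := log_pos (by linarith)
  have hlt : log (1 + t) < t := by
    linarith [log_lt_sub_one_of_pos (by linarith : (0:ℝ) < 1 + t) (by linarith)]
  rw [(hasDerivAt_logCorrection ht).deriv]
  exact div_neg_of_neg_of_pos (by linarith) (by positivity)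

theorem tendsto_logCorrection_atTop : Tendsto logCorrection atTop (𝓝 0) := by
  have hinv : Tendsto (fun t => (log (1 + t))⁻¹) atTop (𝓝 0) :=
    (tendsto_log_atTop.comp (tendsto_atTop_add_const_left _ 1 tendsto_id)).inv_tendsto_atTop
  refine tendsto_of_tendsto_of_tendsto_of_le_of_le' tendsto_const_nhds hinv ?_ ?_
  · filter_upwards [eventually_gt_atTop 0] with t ht using (logCorrection_pos ht).le
  · filter_upwards [eventually_gt_atTop 0] with t ht
    have hL : 0 < log (1 + t) := log_pos (by linarith)
    unfold logCorrection
    rw [div_le_iff₀ (by positivity), inv_mul_eq_div, le_div_iff₀ hL]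
    nlinarith

theorem tendsto_logCorrection_nhdsGT_zero : Tendsto logCorrection (𝓝[>] 0) (𝓝 1) := by
  have hlow : Tendsto (fun t : ℝ => 1 / (t + 1)) (𝓝[>] 0) (𝓝 1) := by
    refine tendsto_nhdsWithin_of_tendsto_nhds ?_
    simpa using ((continuous_add_const (1:ℝ)).tendsto 0).inv₀ (by norm_num)
  refine tendsto_of_tendsto_of_tendsto_of_le_of_le' hlow tendsto_const_nhds ?_ ?_
  · filter_upwards [self_mem_nhdsWithin] with t ht using one_div_add_one_le_logCorrection ht
  · filter_upwards [self_mem_nhdsWithin] with t ht using logCorrection_le_one ht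

namespace IntegralRpowMulLog

variable {p : ℝ} {P : ℝ → ℝ} (hP : ∀ t, P t = ∫ s in (0:ℝ)..t, s ^ p * log (1 + s))
include hP

theorem deriv_eq (hp : 0 ≤ p) {t : ℝ} (ht : 0 < t) :
    deriv P t = t ^ p * log (1 + t) := by
  rw [funext hP]
  refine (hasDerivAt_integral_of_continuousOn isOpen_Ioi
    (continuousOn_rpow_mul_log_one_add hp) fun s hs => ?_).deriv
  rw [uIcc_of_le ht.le] at hs
  exact (show (-1:ℝ) < 0 by norm_num).trans_le hs.1

theorem deriv_deriv_eq (hp : 0 ≤ p) {t : ℝ} (ht : 0 < t) :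
    deriv (deriv P) t = p * t ^ (p - 1) * log (1 + t) + t ^ p / (1 + t) := by
  have : deriv P =ᶠ[𝓝 t] fun s => s ^ p * log (1 + s) :=
    eventually_of_mem (isOpen_Ioi.mem_nhds ht) fun s hs => deriv_eq hP hp hs
  rw [this.deriv_eq, (hasDerivAt_rpow_mul_log_one_add p ht).deriv]

theorem mul_deriv_deriv_div_deriv_eq (hp : 0 ≤ p) {t : ℝ} (ht : 0 < t) :
    t * deriv (deriv P) t / deriv P t = p + logCorrection t := by
  have hL : 0 < log (1 + t) := log_pos (by linarith)
  rw [deriv_deriv_eq hP hp ht, deriv_eq hP hp ht, rpow_sub_one ht.ne', logCorrection]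
  have : 0 < t ^ p := rpow_pos_of_pos ht p
  field_simp
  ring

end IntegralRpowMulLog

theorem example_P_log
    (p : ℝ) (hp : 0 < p) (P : ℝ → ℝ)
    (hP : ∀ t, P t = ∫ s in (0:ℝ)..t, s ^ p * Real.log (1 + s)) :
    (∀ t > (0:ℝ),
      t * deriv (deriv P) t / deriv P t = p + t / ((t + 1) * Real.log (1 + t))) ∧
    StrictAntiOn (fun t => t * deriv (deriv P) t / deriv P t) (Set.Ioi 0) ∧
    IsGLB ((fun t => t * deriv (deriv P) t / deriv P t) '' Set.Ioi 0) p ∧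
    Filter.Tendsto (fun t => t * deriv (deriv P) t / deriv P t) Filter.atTop (nhds p) ∧
    IsLUB ((fun t => t * deriv (deriv P) t / deriv P t) '' Set.Ioi 0) (p + 1) ∧
    Filter.Tendsto (fun t => t * deriv (deriv P) t / deriv P t)
      (nhdsWithin 0 (Set.Ioi 0)) (nhds (p + 1)) ∧
    IsLUB {x : ℝ | ∃ t > (0:ℝ),
        x = t * deriv (deriv P) t / deriv P t + deriv P t / (t * deriv (deriv P) t)}
      (max (p + 1 / p) (p + 1 + 1 / (p + 1))) := by
  set R := fun t => t * deriv (deriv P) t / deriv P t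
  have hR : EqOn R (fun t => p + logCorrection t) (Ioi 0) :=
    fun t ht => IntegralRpowMulLog.mul_deriv_deriv_div_deriv_eq hP hp.le ht
  have hR_mem : ∀ t ∈ Ioi (0:ℝ), R t ∈ Icc p (p + 1) := fun t ht => by
    rw [hR ht]
    exact ⟨by linarith [logCorrection_pos ht], by linarith [logCorrection_le_one ht]⟩
  have hR_atTop : Tendsto R atTop (𝓝 p) := by
    refine Tendsto.congr' (hR.eventuallyEq_of_mem (Ioi_mem_atTop 0)).symm ?_
    simpa using tendsto_logCorrection_atTop.const_add p
  have hR_zero : Tendsto R (𝓝[>] 0) (𝓝 (p + 1)) :=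
    (tendsto_logCorrection_nhdsGT_zero.const_add p).congr'
      (hR.eventuallyEq_of_mem self_mem_nhdsWithin).symm
  have hS : {x : ℝ | ∃ t > (0:ℝ), x = R t + deriv P t / (t * deriv (deriv P) t)} =
      (fun t => R t + 1 / R t) '' Ioi 0 := by
    ext x; simp only [R, one_div_div, mem_ofPred_eq, mem_image, mem_Ioi, eq_comm]
  refine ⟨fun t ht => hR ht, (strictAntiOn_logCorrection.const_add p).congr hR.symm,
    isGLB_image_of_tendsto (fun t ht => (hR_mem t ht).1) (Ioi_mem_atTop 0) hR_atTop, hR_atTop,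
    isLUB_image_of_tendsto (fun t ht => (hR_mem t ht).2) self_mem_nhdsWithin hR_zero, hR_zero, ?_⟩
  rw [hS]
  exact isLUB_image_max_of_tendsto (fun t ht => add_one_div_le_max hp (hR_mem t ht))
    (Ioi_mem_atTop 0) self_mem_nhdsWithin
    (hR_atTop.add (tendsto_const_nhds.div hR_atTop hp.ne'))
    (hR_zero.add (tendsto_const_nhds.div hR_zero (by linarith)))
end

section
/- Let p > 1 and α > 0. Define F(t) = ∫₀ᵗ exp(∫₁ˢ dθ/(αθ + log(1+θ))) ds, P(t) = t^p/p, and Q = F ∘ P. Then for all t > 0, t·Q''(t)/Q'(t) = p/(α + p·log(1 + t^p/p)/t^p) + (p − 1), and sup_{t>0} t·Q''(t)/Q'(t) = p/α + p − 1. -/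
open MeasureTheory ProbabilityTheory

/-!
With `g = F' = exp ∫₁ 1/h` one has `g' = g / h`, so the logarithmic derivative of
`Q' = g(P) P'` is `P' / h(P) + P'' / P'`. For `P t = t^p/p` this gives
`t Q''/Q' = t^p / h(t^p/p) + (p - 1)`, and for `h θ = αθ + log(1 + θ)` the first term is
`p / (α + log(1 + u)/u)` with `u = t^p/p`. As `log(1 + u)/u` is positive and tends to `0`,
the supremum `p/α + p - 1` is approached as `t → ∞` but never attained.
-/

open Set Filter Topology intervalIntegral

noncomputable def expIntegralInv (h : ℝ → ℝ) (s : ℝ) : ℝ :=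
  Real.exp (∫ θ in (1:ℝ)..s, 1 / h θ)

lemma expIntegralInv_pos (h : ℝ → ℝ) (s : ℝ) : 0 < expIntegralInv h s := Real.exp_pos _

section expIntegralInv

variable {h : ℝ → ℝ}

lemma continuousOn_one_div_of_pos (hcont : ContinuousOn h (Ioi 0))
    (hpos : ∀ θ > 0, 0 < h θ) : ContinuousOn (fun θ => 1 / h θ) (Ioi 0) :=
  continuousOn_const.div hcont fun θ hθ => (hpos θ hθ).ne'

lemma intervalIntegrable_one_div_of_pos (hcont : ContinuousOn h (Ioi 0))
    (hpos : ∀ θ > 0, 0 < h θ) {a b : ℝ} (ha : 0 < a) (hb : 0 < b) :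
    IntervalIntegrable (fun θ => 1 / h θ) volume a b :=
  ((continuousOn_one_div_of_pos hcont hpos).mono
    fun _ hx => lt_of_lt_of_le (lt_min ha hb) hx.1).intervalIntegrable

lemma hasDerivAt_expIntegralInv (hcont : ContinuousOn h (Ioi 0)) (hpos : ∀ θ > 0, 0 < h θ)
    {s : ℝ} (hs : 0 < s) : HasDerivAt (expIntegralInv h) (expIntegralInv h s / h s) s := by
  have hk := continuousOn_one_div_of_pos hcont hpos
  have := (integral_hasDerivAt_right (intervalIntegrable_one_div_of_pos hcont hpos one_pos hs)
    (hk.stronglyMeasurableAtFilter isOpen_Ioi s hs) (hk.continuousAt (Ioi_mem_nhds hs))).exp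
  rwa [mul_one_div] at this

lemma monotoneOn_expIntegralInv (hcont : ContinuousOn h (Ioi 0)) (hpos : ∀ θ > 0, 0 < h θ) :
    MonotoneOn (expIntegralInv h) (Ioi 0) := by
  have hderiv {s : ℝ} (hs : s ∈ Ioi 0) := hasDerivAt_expIntegralInv hcont hpos hs
  refine monotoneOn_of_deriv_nonneg (convex_Ioi 0)
    (fun s hs => (hderiv hs).continuousAt.continuousWithinAt)
    (fun s hs => (hderiv (interior_subset hs)).differentiableAt.differentiableWithinAt)
    fun s hs => ?_
  rw [interior_Ioi] at hs
  rw [(hderiv hs).deriv]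
  exact div_nonneg (expIntegralInv_pos h s).le (hpos s hs).le

/-- No continuity at `0` is available (`h` may vanish there); instead `expIntegralInv h` is
monotone on `(0, a]`, hence bounded there by its value at `a`. -/
lemma intervalIntegrable_zero_expIntegralInv (hcont : ContinuousOn h (Ioi 0))
    (hpos : ∀ θ > 0, 0 < h θ) {a : ℝ} (ha : 0 < a) :
    IntervalIntegrable (expIntegralInv h) volume 0 a := by
  rw [intervalIntegrable_iff_integrableOn_Ioc_of_le ha.le]
  have hcont' : ContinuousOn (expIntegralInv h) (Ioc 0 a) := fun s hs =>
    (hasDerivAt_expIntegralInv hcont hpos hs.1).continuousAt.continuousWithinAt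
  refine ⟨hcont'.aestronglyMeasurable measurableSet_Ioc,
    HasFiniteIntegral.restrict_of_bounded (C := expIntegralInv h a) measure_Ioc_lt_top ?_⟩
  filter_upwards [ae_restrict_mem measurableSet_Ioc] with s hs
  rw [Real.norm_eq_abs, abs_of_pos (expIntegralInv_pos h s)]
  exact monotoneOn_expIntegralInv hcont hpos hs.1 (mem_Ioi.2 ha) hs.2

lemma hasDerivAt_integral_expIntegralInv (hcont : ContinuousOn h (Ioi 0))
    (hpos : ∀ θ > 0, 0 < h θ) {a : ℝ} (ha : 0 < a) :
    HasDerivAt (fun t => ∫ s in (0:ℝ)..t, expIntegralInv h s) (expIntegralInv h a) a :=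
  integral_hasDerivAt_right (intervalIntegrable_zero_expIntegralInv hcont hpos ha)
    (ContinuousOn.stronglyMeasurableAtFilter isOpen_Ioi
      (fun _ hs => (hasDerivAt_expIntegralInv hcont hpos hs).continuousAt.continuousWithinAt) a ha)
    (hasDerivAt_expIntegralInv hcont hpos ha).continuousAt

end expIntegralInv

lemma hasDerivAt_rpow_div_self {p t : ℝ} (hp : p ≠ 0) (ht : 0 < t) :
    HasDerivAt (fun t => t ^ p / p) (t ^ (p - 1)) t := by
  have := (Real.hasDerivAt_rpow_const (p := p) (Or.inl ht.ne')).div_const p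
  rwa [mul_div_cancel_left₀ _ hp] at this

lemma elasticity_comp_rpow_div_self {F g h : ℝ → ℝ} {p : ℝ} (hp : 0 < p)
    (hF : ∀ x > 0, HasDerivAt F (g x) x) (hg : ∀ x > 0, HasDerivAt g (g x / h x) x)
    (hg₀ : ∀ x > 0, g x ≠ 0) {t : ℝ} (ht : 0 < t) :
    t * deriv (deriv fun t => F (t ^ p / p)) t / deriv (fun t => F (t ^ p / p)) t
      = t ^ p / h (t ^ p / p) + (p - 1) := by
  have hP {t : ℝ} (ht : 0 < t) : 0 < t ^ p / p := by positivity
  have hQ' {t : ℝ} (ht : 0 < t) :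
      HasDerivAt (fun t => F (t ^ p / p)) (g (t ^ p / p) * t ^ (p - 1)) t :=
    (hF _ (hP ht)).comp t (hasDerivAt_rpow_div_self hp.ne' ht)
  have hQ'' : HasDerivAt (deriv fun t => F (t ^ p / p))
      (g (t ^ p / p) / h (t ^ p / p) * t ^ (p - 1) * t ^ (p - 1)
        + g (t ^ p / p) * ((p - 1) * t ^ (p - 1 - 1))) t := by
    refine (((hg _ (hP ht)).comp t (hasDerivAt_rpow_div_self hp.ne' ht)).mul
      (Real.hasDerivAt_rpow_const (Or.inl ht.ne'))).congr_of_eventuallyEq ?_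
    filter_upwards [Ioi_mem_nhds ht] with s hs using (hQ' hs).deriv
  rw [hQ''.deriv, (hQ' ht).deriv, Real.rpow_sub_one ht.ne' (p - 1), Real.rpow_sub_one ht.ne' p]
  have := hg₀ _ (hP ht)
  field_simp

lemma mul_add_log_one_add_pos {α θ : ℝ} (hα : 0 ≤ α) (hθ : 0 < θ) :
    0 < α * θ + Real.log (1 + θ) :=
  add_pos_of_nonneg_of_pos (by positivity) (Real.log_pos (by linarith))

lemma continuousOn_mul_add_log_one_add (α : ℝ) :
    ContinuousOn (fun θ => α * θ + Real.log (1 + θ)) (Ioi 0) :=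
  (continuousOn_const.mul continuousOn_id).add <|
    (continuousOn_const.add continuousOn_id).log fun θ (hθ : 0 < θ) =>
      show 1 + θ ≠ 0 by positivity

lemma tendsto_log_one_add_div_self_atTop :
    Tendsto (fun u => Real.log (1 + u) / u) atTop (𝓝 0) := by
  have := (Real.tendsto_pow_log_div_mul_add_atTop 1 (-1) 1 one_ne_zero).comp
    (tendsto_atTop_add_const_left atTop 1 tendsto_id)
  refine this.congr fun u => ?_
  simp

lemma tendsto_mul_log_one_add_rpow_div_rpow_atTop {p : ℝ} (hp : 0 < p) :
    Tendsto (fun t => p * Real.log (1 + t ^ p / p) / t ^ p) atTop (𝓝 0) := by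
  refine (tendsto_log_one_add_div_self_atTop.comp
    ((tendsto_rpow_atTop hp).atTop_div_const hp)).congr fun t => ?_
  simp only [Function.comp_apply]
  rw [div_div_eq_mul_div, mul_comm]

lemma isLUB_of_forall_le_of_tendsto_atTop {f : ℝ → ℝ} {L : ℝ} (hle : ∀ t > 0, f t ≤ L)
    (hlim : Tendsto f atTop (𝓝 L)) : IsLUB {x | ∃ t > 0, x = f t} L :=
  ⟨by rintro _ ⟨t, ht, rfl⟩; exact hle t ht,
    fun _ hb => le_of_tendsto hlim <|
      (eventually_gt_atTop 0).mono fun t ht => hb ⟨t, ht, rfl⟩⟩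

theorem example_alpha_log
    (p : ℝ) (hp : 1 < p) (α : ℝ) (hα : 0 < α)
    (F : ℝ → ℝ)
    (hFdef : ∀ t, F t = ∫ s in (0:ℝ)..t,
      Real.exp (∫ θ in (1:ℝ)..s, 1 / (α * θ + Real.log (1 + θ))))
    (Q : ℝ → ℝ) (hQdef : ∀ t, Q t = F (t ^ p / p)) :
    (∀ t > (0:ℝ),
      t * deriv (deriv Q) t / deriv Q t
        = p / (α + p * Real.log (1 + t ^ p / p) / t ^ p) + (p - 1)) ∧
    IsLUB {x : ℝ | ∃ t > (0:ℝ), x = t * deriv (deriv Q) t / deriv Q t}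
      (p / α + p - 1) := by
  have hp₀ : 0 < p := by linarith
  set h := fun θ : ℝ => α * θ + Real.log (1 + θ)
  have hpos : ∀ θ > 0, 0 < h θ := fun θ hθ => mul_add_log_one_add_pos hα.le hθ
  have hcont : ContinuousOn h (Ioi 0) := continuousOn_mul_add_log_one_add α
  have hF (x : ℝ) (hx : 0 < x) : HasDerivAt F (expIntegralInv h x) x :=
    funext hFdef ▸ hasDerivAt_integral_expIntegralInv hcont hpos hx
  have formula (t : ℝ) (ht : t > 0) : t * deriv (deriv Q) t / deriv Q t
      = p / (α + p * Real.log (1 + t ^ p / p) / t ^ p) + (p - 1) := by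
    rw [funext hQdef, elasticity_comp_rpow_div_self hp₀ hF
      (fun _ hx => hasDerivAt_expIntegralInv hcont hpos hx)
      (fun x _ => (expIntegralInv_pos h x).ne') ht]
    simp only [h]
    field_simp
  refine ⟨formula, isLUB_of_forall_le_of_tendsto_atTop (fun t ht => ?_) ?_⟩
  · have hlog_nonneg : 0 ≤ p * Real.log (1 + t ^ p / p) / t ^ p := by
      have := Real.log_nonneg (le_add_of_nonneg_right (by positivity) : (1:ℝ) ≤ 1 + t ^ p / p)
      positivity
    rw [formula t ht, add_sub_assoc]
    gcongr
    linarith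
  · rw [add_sub_assoc]
    refine Tendsto.congr' ((eventually_gt_atTop 0).mono fun t ht => (formula t ht).symm) ?_
    simpa using (tendsto_const_nhds.div
      ((tendsto_mul_log_one_add_rpow_div_rpow_atTop hp₀).const_add α) (by simpa using hα.ne')
      ).add_const (p - 1)
end
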